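/- arXiv:0810.4117 — 2 statements merged into one kernel-verified Lean document; each statement's English description precedes it below -/
import Mathlib

section
/- Let (X,d,W) be a uniformly convex W-hyperbolic space with a monotone modulus of uniform convexity η. Assume r > 0, ε ∈ (0,2] and a,x,y ∈ X satisfy d(x,a) ≤ r, d(y,a) ≤ r and d(x,y) ≥ εr. Then for every λ ∈ [0,1] and every s ≥ r, d((1−λ)x ⊕ λy, a) ≤ (1 − 2λ(1−λ)η(s,ε))·r. -/
open Set Filter Metric Bornology Function

/-- A `W`-hyperbolic space structure on a metric space `X` (Kohlenbach).
`W x y l` denotes `(1-l)x ⊕ l y`. -/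
structure WHyp (X : Type*) [MetricSpace X] where
  W : X → X → ℝ → X
  W1 : ∀ (x y z : X), ∀ l ∈ Set.Icc (0:ℝ) 1,
    dist z (W x y l) ≤ (1 - l) * dist z x + l * dist z y
  W2 : ∀ (x y : X), ∀ l ∈ Set.Icc (0:ℝ) 1, ∀ l' ∈ Set.Icc (0:ℝ) 1,
    dist (W x y l) (W x y l') = |l - l'| * dist x y
  W3 : ∀ (x y : X), ∀ l ∈ Set.Icc (0:ℝ) 1, W x y l = W y x (1 - l)
  W4 : ∀ (x y z w : X), ∀ l ∈ Set.Icc (0:ℝ) 1,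
    dist (W x z l) (W y w l) ≤ (1 - l) * dist x y + l * dist z w

/-- `η` is a modulus of uniform convexity for the `W`-hyperbolic space `H`. -/
def WHyp.UnifConvex {X : Type*} [MetricSpace X] (H : WHyp X) (η : ℝ → ℝ → ℝ) : Prop :=
  (∀ r ε : ℝ, 0 < r → ε ∈ Set.Ioc (0:ℝ) 2 → η r ε ∈ Set.Ioc (0:ℝ) 1) ∧
  (∀ (r ε : ℝ) (a x y : X), 0 < r → ε ∈ Set.Ioc (0:ℝ) 2 →
    dist x a ≤ r → dist y a ≤ r → ε * r ≤ dist x y →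
    dist (H.W x y (1/2)) a ≤ (1 - η r ε) * r)

/-- A modulus of uniform convexity is monotone if it decreases in `r` for fixed `ε`. -/
def MonotoneModulus (η : ℝ → ℝ → ℝ) : Prop :=
  ∀ r s ε : ℝ, 0 < r → r ≤ s → ε ∈ Set.Ioc (0:ℝ) 2 → η s ε ≤ η r ε

/-
For `l ≤ 1/2` the point `(1-l)x ⊕ ly` coincides with `(1-2l)x ⊕ 2l m`, where `m` is the midpoint
of `x` and `y`: both points lie within `l·d(x,y)` of `x` and within `(1-l)·d(x,y)` of `y`, and
uniform convexity forces such a point to be unique (two distinct ones would have a midpoint strictly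
closer to both `x` and `y`, contradicting the triangle inequality). Convexity of the metric along
`[x, m]` then gives `d((1-l)x ⊕ ly, a) ≤ (1-2l)r + 2l(1-η(r,ε))r`, and `l > 1/2` follows by symmetry.
Monotonicity of `η` passes from `η(r,ε)` to `η(s,ε)`.
-/

namespace WHyp

variable {X : Type*} [MetricSpace X] (H : WHyp X)

lemma W_zero (x y : X) : H.W x y 0 = x := by
  have h := H.W1 x y x 0 ⟨le_rfl, zero_le_one⟩
  simp only [sub_zero, one_mul, dist_self, zero_mul, add_zero, dist_le_zero] at h
  exact h.symm

lemma dist_W_left (x y : X) {l : ℝ} (hl : l ∈ Icc (0:ℝ) 1) :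
    dist x (H.W x y l) = l * dist x y := by
  have h := H.W2 x y l hl 0 ⟨le_rfl, zero_le_one⟩
  rwa [H.W_zero, sub_zero, abs_of_nonneg hl.1, dist_comm] at h

lemma W_self (x : X) {l : ℝ} (hl : l ∈ Icc (0:ℝ) 1) : H.W x x l = x :=
  (dist_eq_zero.mp (by rw [H.dist_W_left x x hl, dist_self, mul_zero])).symm

lemma dist_W_right (x y : X) {l : ℝ} (hl : l ∈ Icc (0:ℝ) 1) :
    dist y (H.W x y l) = (1 - l) * dist x y := by
  rw [H.W3 x y l hl, H.dist_W_left y x ⟨by linarith [hl.2], by linarith [hl.1]⟩, dist_comm]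

variable {H} {η : ℝ → ℝ → ℝ}

lemma dist_midpoint_lt (hU : H.UnifConvex η) {p q c : X} {ρ : ℝ} (hρ : 0 < ρ) (hpq : p ≠ q)
    (hp : dist p c ≤ ρ) (hq : dist q c ≤ ρ) : dist (H.W p q (1/2)) c < ρ := by
  have hε : min (dist p q / ρ) 2 ∈ Ioc (0:ℝ) 2 :=
    ⟨lt_min (div_pos (dist_pos.mpr hpq) hρ) two_pos, min_le_right _ _⟩
  have hsep : min (dist p q / ρ) 2 * ρ ≤ dist p q :=
    (mul_le_mul_of_nonneg_right (min_le_left _ _) hρ.le).trans (div_mul_cancel₀ _ hρ.ne').le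
  have hη := (hU.1 ρ _ hρ hε).1
  have := hU.2 ρ _ c p q hρ hε hp hq hsep
  nlinarith

lemma eq_of_dist_le_of_dist_le (hU : H.UnifConvex η) {x y p q : X} {ρ σ : ℝ}
    (hρ : 0 < ρ) (hσ : 0 < σ) (hxy : ρ + σ ≤ dist x y)
    (hpx : dist p x ≤ ρ) (hqx : dist q x ≤ ρ) (hpy : dist p y ≤ σ) (hqy : dist q y ≤ σ) :
    p = q := by
  by_contra hpq
  have hx := dist_midpoint_lt hU hρ hpq hpx hqx
  have hy := dist_midpoint_lt hU hσ hpq hpy hqy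
  linarith [dist_triangle_left x y (H.W p q (1/2))]

lemma W_eq_W_midpoint (hU : H.UnifConvex η) (x y : X) {l : ℝ} (hl : l ∈ Icc (0:ℝ) (1/2)) :
    H.W x y l = H.W x (H.W x y (1/2)) (2 * l) := by
  have hl1 : l ∈ Icc (0:ℝ) 1 := ⟨hl.1, by linarith [hl.2]⟩
  have h2l : 2 * l ∈ Icc (0:ℝ) 1 := ⟨by linarith [hl.1], by linarith [hl.2]⟩
  have hhalf : (1/2 : ℝ) ∈ Icc (0:ℝ) 1 := by norm_num
  rcases eq_or_ne x y with rfl | hne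
  · rw [H.W_self x hhalf, H.W_self x hl1, H.W_self x h2l]
  rcases hl.1.eq_or_lt with rfl | hl0
  · rw [mul_zero, H.W_zero, H.W_zero]
  have hD := dist_pos.mpr hne
  set m := H.W x y (1/2)
  have hxm : dist x m = 1/2 * dist x y := H.dist_W_left x y hhalf
  have hym : dist y m = 1/2 * dist x y := by rw [H.dist_W_right x y hhalf]; norm_num
  have hmp : dist m (H.W x m (2 * l)) = (1 - 2 * l) * dist x m := H.dist_W_right x m h2l
  have hpx : dist (H.W x y l) x = l * dist x y := by rw [dist_comm, H.dist_W_left x y hl1]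
  have hpy : dist (H.W x y l) y = (1 - l) * dist x y := by rw [dist_comm, H.dist_W_right x y hl1]
  have hqx : dist (H.W x m (2 * l)) x = l * dist x y := by
    rw [dist_comm, H.dist_W_left x m h2l, hxm]; ring
  have hqy : dist (H.W x m (2 * l)) y ≤ (1 - l) * dist x y :=
    calc dist (H.W x m (2 * l)) y ≤ dist y m + dist m (H.W x m (2 * l)) := by
          rw [dist_comm _ y]; exact dist_triangle _ _ _
      _ = (1 - l) * dist x y := by rw [hym, hmp, hxm]; ring
  exact eq_of_dist_le_of_dist_le hU (mul_pos hl0 hD) (mul_pos (by linarith [hl.2]) hD)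
    (by linarith) hpx.le hqx.le hpy.le hqy

lemma dist_W_le_of_le_half (hU : H.UnifConvex η) {r ε : ℝ} {a x y : X}
    (hr : 0 < r) (hε : ε ∈ Ioc (0:ℝ) 2)
    (hxa : dist x a ≤ r) (hya : dist y a ≤ r) (hxy : ε * r ≤ dist x y)
    {l : ℝ} (hl : l ∈ Icc (0:ℝ) (1/2)) :
    dist (H.W x y l) a ≤ (1 - 2 * l * η r ε) * r := by
  have h2l : 2 * l ∈ Icc (0:ℝ) 1 := ⟨by linarith [hl.1], by linarith [hl.2]⟩
  have hma := hU.2 r ε a x y hr hε hxa hya hxy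
  rw [H.W_eq_W_midpoint hU x y hl, dist_comm]
  calc _ ≤ (1 - 2 * l) * dist a x + 2 * l * dist a (H.W x y (1/2)) :=
        H.W1 x (H.W x y (1/2)) a (2 * l) h2l
    _ ≤ (1 - 2 * l) * r + 2 * l * ((1 - η r ε) * r) := by
        rw [dist_comm a x, dist_comm a]
        gcongr
        · linarith [hl.2]
        · linarith [hl.1]
    _ = (1 - 2 * l * η r ε) * r := by ring

lemma dist_W_le (hU : H.UnifConvex η) {r ε : ℝ} {a x y : X}
    (hr : 0 < r) (hε : ε ∈ Ioc (0:ℝ) 2)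
    (hxa : dist x a ≤ r) (hya : dist y a ≤ r) (hxy : ε * r ≤ dist x y)
    {l : ℝ} (hl : l ∈ Icc (0:ℝ) 1) :
    dist (H.W x y l) a ≤ (1 - 2 * min l (1 - l) * η r ε) * r := by
  rcases le_total l (1/2) with hl2 | hl2
  · rw [min_eq_left (by linarith)]
    exact dist_W_le_of_le_half hU hr hε hxa hya hxy ⟨hl.1, hl2⟩
  · rw [min_eq_right (by linarith), H.W3 x y l hl]
    exact dist_W_le_of_le_half hU hr hε hya hxa (by rwa [dist_comm])
      ⟨by linarith [hl.2], by linarith⟩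

end WHyp

theorem stmt2 {X : Type*} [MetricSpace X] (H : WHyp X) (η : ℝ → ℝ → ℝ)
    (hU : H.UnifConvex η) (hmon : MonotoneModulus η) (r ε : ℝ) (a x y : X)
    (hr : 0 < r) (hε : ε ∈ Set.Ioc (0:ℝ) 2)
    (hxa : dist x a ≤ r) (hya : dist y a ≤ r) (hxy : ε * r ≤ dist x y) :
    ∀ l ∈ Set.Icc (0:ℝ) 1, ∀ s : ℝ, r ≤ s →
      dist (H.W x y l) a ≤ (1 - 2 * l * (1 - l) * η s ε) * r := by
  intro l hl s hs
  have hηs : 0 ≤ η s ε := (hU.1 s ε (hr.trans_le hs) hε).1.le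
  have hηsr : η s ε ≤ η r ε := hmon r s ε hr hs hε
  have hmin : l * (1 - l) ≤ min l (1 - l) :=
    le_min (mul_le_of_le_one_right hl.1 (by linarith [hl.1]))
      (mul_le_of_le_one_left (by linarith [hl.2]) hl.2)
  have hcoef : 2 * l * (1 - l) * η s ε ≤ 2 * min l (1 - l) * η r ε :=
    calc 2 * l * (1 - l) * η s ε ≤ 2 * min l (1 - l) * η s ε :=
          mul_le_mul_of_nonneg_right (by linarith) hηs
      _ ≤ 2 * min l (1 - l) * η r ε :=
          mul_le_mul_of_nonneg_left hηsr (by have := le_min hl.1 (sub_nonneg.mpr hl.2); linarith)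
  exact (WHyp.dist_W_le hU hr hε hxa hya hxy hl).trans
    (mul_le_mul_of_nonneg_right (by linarith) hr.le)
end

section
/- Let (X,d,W) be a complete UCW-hyperbolic space, C ⊆ X a nonempty closed convex subset and T : C → C nonexpansive. The following are equivalent: (i) T has a fixed point; (ii) there exists a bounded sequence (u_n) in C with lim_{n→∞} d(u_n, Tu_n) = 0; (iii) the sequence of Picard iterates (T^n x) is bounded for some x ∈ C; (iv) (T^n x) is bounded for all x ∈ C; (v) the Krasnoselski–Mann iteration (x_n) is bounded for some x ∈ C and some sequence (λ_n) in [0,1] satisfying one of the following: (a) λ_n = λ ∈ (0,1] constant; (b) lim_{n→∞} λ_n = 1; (c) limsup_n λ_n < 1 and Σ_{n=0}^∞ λ_n diverges; (vi) the Krasnoselski–Mann iteration (x_n) is bounded for all x ∈ C and all sequences (λ_n) in [0,1]. -/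
open Set Filter Metric Bornology Function

/-- A subset `C` is convex in the `W`-hyperbolic space `H`. -/
def WHyp.ConvexSet {X : Type*} [MetricSpace X] (H : WHyp X) (C : Set X) : Prop :=
  ∀ x ∈ C, ∀ y ∈ C, ∀ l ∈ Set.Icc (0:ℝ) 1, H.W x y l ∈ C

/-- The Krasnoselski–Mann iteration: `x₀ = x`, `x_{n+1} = (1-λ_n)x_n ⊕ λ_n T x_n`. -/
def WHyp.kmSeq {X : Type*} [MetricSpace X] (H : WHyp X) (T : X → X) (l : ℕ → ℝ)
    (x : X) : ℕ → X
  | 0 => x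
  | n + 1 => H.W (H.kmSeq T l x n) (T (H.kmSeq T l x n)) (l n)

/-!
Everything rests on asymptotic centres. For a bounded sequence `(u n)` let
`r y = limsup (dist (u n) y)`. Uniform convexity with a monotone modulus forces points of `C`
whose radius is close to `inf_C r` to be close to each other (otherwise their midpoint, which
lies in `C`, would have radius below the infimum), so in a complete space `r` has a unique
minimiser `c` on `C`. Hence `Tc = c` as soon as `r (T c) ≤ r c`. This holds when
`dist (u n) (T (u n)) → 0`, and also for a Krasnoselski–Mann sequence with `∑ λ n = ∞`, because
`dist (x (n+1)) (T c) ≤ (1 - λ n) dist (x n) (T c) + λ n dist (x n) c`.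
Conversely a fixed point `p` makes every Krasnoselski–Mann sequence Fejér monotone with respect
to `p`. Picard iteration is the case `λ n = 1`, and each of (a), (b), (c) forces `∑ λ n = ∞`.
-/

open Topology

theorem tendsto_zero_of_eventually_le_one_sub_mul {e l : ℕ → ℝ} (he : ∀ n, 0 ≤ e n)
    (hl : ∀ n, 0 ≤ l n) (hns : ¬ Summable l)
    (hrec : ∀ᶠ n in atTop, e (n + 1) ≤ (1 - l n) * e n) : Tendsto e atTop (𝓝 0) := by
  obtain ⟨N, hN⟩ := eventually_atTop.mp hrec
  -- `1 - t ≤ exp (-t)` bounds the product of the factors `1 - l n` by `exp (-∑ l n)`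
  have hbound : ∀ k, e (k + N) ≤ e N * Real.exp (-∑ i ∈ Finset.range k, l (i + N)) := by
    intro k
    induction k with
    | zero => simp
    | succ k ih =>
      calc e (k + 1 + N) = e (k + N + 1) := by rw [add_right_comm]
        _ ≤ (1 - l (k + N)) * e (k + N) := hN _ (Nat.le_add_left N k)
        _ ≤ Real.exp (-l (k + N)) * (e N * Real.exp (-∑ i ∈ Finset.range k, l (i + N))) :=
          mul_le_mul (by linarith [Real.add_one_le_exp (-l (k + N))]) ih (he _)
            (Real.exp_pos _).le
        _ = e N * Real.exp (-∑ i ∈ Finset.range (k + 1), l (i + N)) := by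
          rw [Finset.sum_range_succ, neg_add, Real.exp_add]
          ring
  have hsum : Tendsto (fun k => ∑ i ∈ Finset.range k, l (i + N)) atTop atTop :=
    (not_summable_iff_tendsto_nat_atTop_of_nonneg fun i => hl _).mp
      fun h => hns ((summable_nat_add_iff N).mp h)
  have hlim : Tendsto (fun k => e N * Real.exp (-∑ i ∈ Finset.range k, l (i + N)))
      atTop (𝓝 0) := by
    simpa using (Real.tendsto_exp_neg_atTop_nhds_zero.comp hsum).const_mul (e N)
  exact (tendsto_add_atTop_iff_nat N).mp
    (tendsto_of_tendsto_of_tendsto_of_le_of_le tendsto_const_nhds hlim (fun k => he _) hbound)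

theorem limsup_le_limsup_of_le_convex_comb {a b l : ℕ → ℝ} (ha : ∀ n, 0 ≤ a n)
    (hb : IsBoundedUnder (· ≤ ·) atTop b) (hl : ∀ n, l n ∈ Icc (0 : ℝ) 1) (hns : ¬ Summable l)
    (hrec : ∀ n, a (n + 1) ≤ (1 - l n) * a n + l n * b n) :
    limsup a atTop ≤ limsup b atTop := by
  refine le_of_forall_pos_le_add fun ε hε => ?_
  set c := limsup b atTop + ε / 2 with hc
  have hbc : ∀ᶠ n in atTop, b n ≤ c :=
    (eventually_lt_of_limsup_lt (by linarith) hb).mono fun _ h => h.le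
  have hexcess : Tendsto (fun n => max (a n - c) 0) atTop (𝓝 0) := by
    refine tendsto_zero_of_eventually_le_one_sub_mul (fun n => le_max_right _ _)
      (fun n => (hl n).1) hns ?_
    filter_upwards [hbc] with n hn
    obtain ⟨hl0, hl1⟩ := hl n
    refine max_le ?_ (mul_nonneg (by linarith) (le_max_right _ _))
    calc a (n + 1) - c ≤ (1 - l n) * (a n - c) := by
          linarith [hrec n, mul_le_mul_of_nonneg_left hn hl0]
      _ ≤ (1 - l n) * max (a n - c) 0 :=
          mul_le_mul_of_nonneg_left (le_max_left _ _) (by linarith)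
  refine limsup_le_of_le (isCoboundedUnder_le_of_le atTop ha) ?_
  filter_upwards [hexcess.eventually (eventually_le_nhds (half_pos hε))] with n hn
  linarith [le_max_left (a n - c) 0]

theorem not_summable_of_tendsto {l : ℕ → ℝ} {a : ℝ} (ha : a ≠ 0)
    (h : Tendsto l atTop (𝓝 a)) : ¬ Summable l :=
  fun hs => ha (tendsto_nhds_unique h hs.tendsto_atTop_zero)

section AsymptoticRadius

variable {X : Type*} [MetricSpace X] {u : ℕ → X}

noncomputable def asymptoticRadiusAt (u : ℕ → X) (y : X) : ℝ :=
  limsup (fun n => dist (u n) y) atTop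

noncomputable def asymptoticRadius (u : ℕ → X) (C : Set X) : ℝ :=
  sInf (asymptoticRadiusAt u '' C)

theorem isBoundedUnder_dist (hu : IsBounded (range u)) (y : X) :
    IsBoundedUnder (· ≤ ·) atTop fun n => dist (u n) y := by
  obtain ⟨r, hr⟩ := hu.subset_closedBall y
  exact isBoundedUnder_of ⟨r, fun n => hr (mem_range_self n)⟩

theorem asymptoticRadiusAt_nonneg (hu : IsBounded (range u)) (y : X) :
    0 ≤ asymptoticRadiusAt u y :=
  le_limsup_of_frequently_le (Frequently.of_forall fun _ => dist_nonneg)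
    (isBoundedUnder_dist hu y)

theorem asymptoticRadiusAt_le_of_forall_pos {y : X} {a : ℝ}
    (h : ∀ ε > 0, ∀ᶠ n in atTop, dist (u n) y ≤ a + ε) : asymptoticRadiusAt u y ≤ a :=
  le_of_forall_pos_le_add fun ε hε =>
    limsup_le_of_le (isCoboundedUnder_le_of_le atTop fun _ => dist_nonneg) (h ε hε)

theorem eventually_dist_le_asymptoticRadiusAt_add (hu : IsBounded (range u)) (y : X) {ε : ℝ}
    (hε : 0 < ε) : ∀ᶠ n in atTop, dist (u n) y ≤ asymptoticRadiusAt u y + ε :=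
  (eventually_lt_of_limsup_lt (lt_add_of_pos_right _ hε) (isBoundedUnder_dist hu y)).mono
    fun _ h => h.le

theorem dist_le_asymptoticRadiusAt_add (hu : IsBounded (range u)) (y z : X) :
    dist y z ≤ asymptoticRadiusAt u y + asymptoticRadiusAt u z := by
  refine le_of_forall_pos_le_add fun ε hε => ?_
  obtain ⟨n, hy, hz⟩ := ((eventually_dist_le_asymptoticRadiusAt_add hu y (half_pos hε)).and
    (eventually_dist_le_asymptoticRadiusAt_add hu z (half_pos hε))).exists
  linarith [dist_triangle_left y z (u n)]

theorem lipschitzWith_asymptoticRadiusAt (hu : IsBounded (range u)) :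
    LipschitzWith 1 (asymptoticRadiusAt u) :=
  LipschitzWith.of_le_add fun y z => asymptoticRadiusAt_le_of_forall_pos fun ε hε => by
    filter_upwards [eventually_dist_le_asymptoticRadiusAt_add hu z hε] with n hn
    linarith [dist_triangle (u n) z y, dist_comm z y]

theorem bddBelow_asymptoticRadiusAt_image (hu : IsBounded (range u)) (C : Set X) :
    BddBelow (asymptoticRadiusAt u '' C) :=
  ⟨0, forall_mem_image.2 fun z _ => asymptoticRadiusAt_nonneg hu z⟩

theorem asymptoticRadius_le (hu : IsBounded (range u)) {C : Set X} {y : X} (hy : y ∈ C) :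
    asymptoticRadius u C ≤ asymptoticRadiusAt u y :=
  csInf_le (bddBelow_asymptoticRadiusAt_image hu C) (mem_image_of_mem _ hy)

theorem exists_seq_tendsto_asymptoticRadius (hu : IsBounded (range u)) {C : Set X}
    (hC : C.Nonempty) : ∃ y : ℕ → X, (∀ k, y k ∈ C) ∧
      Tendsto (fun k => asymptoticRadiusAt u (y k)) atTop (𝓝 (asymptoticRadius u C)) := by
  obtain ⟨v, -, hv, hvC⟩ :=
    exists_seq_tendsto_sInf (hC.image _) (bddBelow_asymptoticRadiusAt_image hu C)
  choose y hyC hyv using hvC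
  refine ⟨y, hyC, ?_⟩
  simp only [hyv]
  exact hv

theorem asymptoticRadiusAt_map_le_of_tendsto_dist {C : Set X} {T : X → X}
    (hTne : ∀ x ∈ C, ∀ y ∈ C, dist (T x) (T y) ≤ dist x y) (huC : ∀ n, u n ∈ C)
    (hu : IsBounded (range u)) (hTu : Tendsto (fun n => dist (u n) (T (u n))) atTop (𝓝 0))
    {c : X} (hc : c ∈ C) : asymptoticRadiusAt u (T c) ≤ asymptoticRadiusAt u c :=
  asymptoticRadiusAt_le_of_forall_pos fun ε hε => by
    filter_upwards [hTu.eventually (eventually_le_nhds (half_pos hε)),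
      eventually_dist_le_asymptoticRadiusAt_add hu c (half_pos hε)] with n hTn hn
    linarith [dist_triangle (u n) (T (u n)) (T c), hTne _ (huC n) c hc]

end AsymptoticRadius

namespace WHyp

variable {X : Type*} [MetricSpace X] (H : WHyp X) {η : ℝ → ℝ → ℝ} {u : ℕ → X}

theorem asymptoticRadiusAt_midpoint_le (hU : H.UnifConvex η) {s ε : ℝ} (hs : 0 < s)
    (hε : ε ∈ Ioc (0 : ℝ) 2) {y z : X} (hy : ∀ᶠ n in atTop, dist (u n) y ≤ s)
    (hz : ∀ᶠ n in atTop, dist (u n) z ≤ s) (hyz : ε * s ≤ dist y z) :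
    asymptoticRadiusAt u (H.W y z (1 / 2)) ≤ (1 - η s ε) * s := by
  refine limsup_le_of_le (isCoboundedUnder_le_of_le atTop fun _ => dist_nonneg) ?_
  filter_upwards [hy, hz] with n hny hnz
  rw [dist_comm]
  exact hU.2 s ε (u n) y z hs hε (by rwa [dist_comm]) (by rwa [dist_comm]) hyz

theorem dist_le_of_asymptoticRadiusAt_le (hU : H.UnifConvex η) (hmon : MonotoneModulus η)
    {C : Set X} (hC : H.ConvexSet C) (hu : IsBounded (range u)) {δ : ℝ} (hδ : 0 < δ) :
    ∃ α > 0, ∀ y ∈ C, ∀ z ∈ C, asymptoticRadiusAt u y ≤ asymptoticRadius u C + α →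
      asymptoticRadiusAt u z ≤ asymptoticRadius u C + α → dist y z ≤ δ := by
  set m := asymptoticRadius u C
  rcases le_or_gt m 0 with hm | hm
  · refine ⟨δ / 2, half_pos hδ, fun y _ z _ hy hz => ?_⟩
    linarith [dist_le_asymptoticRadiusAt_add hu y z]
  set ε₀ := min δ (m + 2) / (m + 2)
  have hε₀ : ε₀ ∈ Ioc (0 : ℝ) 2 :=
    ⟨by positivity, (div_le_one (by linarith)).2 (min_le_right _ _) |>.trans one_le_two⟩
  obtain ⟨hη₀, hη₁⟩ := hU.1 (m + 2) ε₀ (by linarith) hε₀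
  set α := min 1 (η (m + 2) ε₀ * m / 4)
  have hα : 0 < α := by positivity
  refine ⟨α, hα, fun y hyC z hzC hy hz => ?_⟩
  by_contra! hfar
  -- `m ≤ r (midpoint) ≤ (1 - η s ε₀) s ≤ (1 - η (m + 2) ε₀) (m + 2α) < m` at scale `s = m + 2α`
  set s := m + 2 * α
  have hs : s ≤ m + 2 := by linarith [min_le_left 1 (η (m + 2) ε₀ * m / 4)]
  have hev : ∀ w, asymptoticRadiusAt u w ≤ m + α → ∀ᶠ n in atTop, dist (u n) w ≤ s :=
    fun w hw => (eventually_dist_le_asymptoticRadiusAt_add hu w hα).mono fun n hn => by linarith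
  have hgap : ε₀ * s ≤ dist y z :=
    calc ε₀ * s ≤ ε₀ * (m + 2) := by gcongr
      _ = min δ (m + 2) := div_mul_cancel₀ _ (by positivity)
      _ ≤ dist y z := (min_le_left _ _).trans hfar.le
  have hmid := H.asymptoticRadiusAt_midpoint_le hU (by positivity) hε₀ (hev y hy) (hev z hz) hgap
  have hinf := asymptoticRadius_le hu (hC y hyC z hzC (1 / 2) ⟨by norm_num, by norm_num⟩)
  have hs₀ : 0 < s := by positivity
  have hmono := hmon s (m + 2) ε₀ hs₀ hs hε₀
  have hα' : α ≤ η (m + 2) ε₀ * m / 4 := min_le_right _ _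
  nlinarith [mul_le_mul_of_nonneg_right hmono hs₀.le]

theorem exists_asymptoticCenter [CompleteSpace X] (hU : H.UnifConvex η)
    (hmon : MonotoneModulus η) {C : Set X} (hCne : C.Nonempty) (hCcl : IsClosed C)
    (hC : H.ConvexSet C) (hu : IsBounded (range u)) :
    ∃ c ∈ C, ∀ y ∈ C, asymptoticRadiusAt u y ≤ asymptoticRadiusAt u c → y = c := by
  set m := asymptoticRadius u C
  obtain ⟨y, hyC, hy⟩ := exists_seq_tendsto_asymptoticRadius hu hCne
  have hcauchy : CauchySeq y := by
    refine Metric.cauchySeq_iff'.2 fun δ hδ => ?_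
    obtain ⟨α, hα, hclose⟩ := H.dist_le_of_asymptoticRadiusAt_le hU hmon hC hu (half_pos hδ)
    obtain ⟨N, hN⟩ := eventually_atTop.1 (hy.eventually_le_const (lt_add_of_pos_right m hα))
    exact ⟨N, fun k hk =>
      (hclose _ (hyC k) _ (hyC N) (hN k hk) (hN N le_rfl)).trans_lt (half_lt_self hδ)⟩
  obtain ⟨c, hc⟩ := cauchySeq_tendsto_of_complete hcauchy
  have hcC : c ∈ C := hCcl.mem_of_tendsto hc (Eventually.of_forall hyC)
  have hrc : asymptoticRadiusAt u c = m :=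
    tendsto_nhds_unique (((lipschitzWith_asymptoticRadiusAt hu).continuous.tendsto c).comp hc) hy
  refine ⟨c, hcC, fun z hzC hz => eq_of_forall_dist_le fun δ hδ => ?_⟩
  obtain ⟨α, hα, hclose⟩ := H.dist_le_of_asymptoticRadiusAt_le hU hmon hC hu hδ
  exact hclose z hzC c hcC (by linarith) (by linarith)

theorem exists_isFixedPt_of_asymptoticRadiusAt_map_le [CompleteSpace X] (hU : H.UnifConvex η)
    (hmon : MonotoneModulus η) {C : Set X} (hCne : C.Nonempty) (hCcl : IsClosed C)
    (hC : H.ConvexSet C) {T : X → X} (hT : MapsTo T C C) (hu : IsBounded (range u))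
    (hTu : ∀ c ∈ C, asymptoticRadiusAt u (T c) ≤ asymptoticRadiusAt u c) :
    ∃ p ∈ C, IsFixedPt T p := by
  obtain ⟨c, hcC, hc⟩ := H.exists_asymptoticCenter hU hmon hCne hCcl hC hu
  exact ⟨c, hcC, hc _ (hT hcC) (hTu c hcC)⟩

theorem W_one (x y : X) : H.W x y 1 = y :=
  (dist_le_zero.1 (by simpa using H.W1 x y y 1 ⟨zero_le_one, le_rfl⟩)).symm

variable {T : X → X} {l : ℕ → ℝ} {x : X}

theorem kmSeq_const_one : H.kmSeq T (fun _ => 1) x = fun n => T^[n] x := by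
  funext n
  induction n with
  | zero => rfl
  | succ n ih => rw [kmSeq, W_one, ih, iterate_succ_apply']

theorem kmSeq_mem {C : Set X} (hC : H.ConvexSet C) (hT : MapsTo T C C)
    (hl : ∀ n, l n ∈ Icc (0 : ℝ) 1) (hx : x ∈ C) (n : ℕ) : H.kmSeq T l x n ∈ C := by
  induction n with
  | zero => exact hx
  | succ n ih => exact hC _ ih _ (hT ih) _ (hl n)

theorem dist_kmSeq_succ_le {n : ℕ} (hl : l n ∈ Icc (0 : ℝ) 1) (p : X) :
    dist (H.kmSeq T l x (n + 1)) p ≤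
      (1 - l n) * dist (H.kmSeq T l x n) p + l n * dist (T (H.kmSeq T l x n)) p := by
  have h := H.W1 (H.kmSeq T l x n) (T (H.kmSeq T l x n)) p (l n) hl
  rwa [dist_comm p, dist_comm p, dist_comm p] at h

theorem dist_kmSeq_le_of_isFixedPt {C : Set X} (hC : H.ConvexSet C) (hT : MapsTo T C C)
    (hTne : ∀ x ∈ C, ∀ y ∈ C, dist (T x) (T y) ≤ dist x y) (hl : ∀ n, l n ∈ Icc (0 : ℝ) 1)
    (hx : x ∈ C) {p : X} (hpC : p ∈ C) (hp : IsFixedPt T p) (n : ℕ) :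
    dist (H.kmSeq T l x n) p ≤ dist x p := by
  induction n with
  | zero => exact le_rfl
  | succ n ih =>
    have hTp : dist (T (H.kmSeq T l x n)) p ≤ dist (H.kmSeq T l x n) p := by
      simpa only [hp.eq] using hTne _ (H.kmSeq_mem hC hT hl hx n) p hpC
    calc dist (H.kmSeq T l x (n + 1)) p
        ≤ (1 - l n) * dist (H.kmSeq T l x n) p + l n * dist (T (H.kmSeq T l x n)) p :=
          H.dist_kmSeq_succ_le (hl n) p
      _ ≤ dist (H.kmSeq T l x n) p := by nlinarith [(hl n).1]
      _ ≤ dist x p := ih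

theorem isBounded_range_kmSeq_of_isFixedPt {C : Set X} (hC : H.ConvexSet C)
    (hT : MapsTo T C C) (hTne : ∀ x ∈ C, ∀ y ∈ C, dist (T x) (T y) ≤ dist x y)
    (hl : ∀ n, l n ∈ Icc (0 : ℝ) 1) (hx : x ∈ C) {p : X} (hpC : p ∈ C) (hp : IsFixedPt T p) :
    IsBounded (range (H.kmSeq T l x)) :=
  (isBounded_iff_subset_closedBall p).2
    ⟨dist x p, range_subset_iff.2 (H.dist_kmSeq_le_of_isFixedPt hC hT hTne hl hx hpC hp)⟩

theorem asymptoticRadiusAt_map_le_of_kmSeq {C : Set X} (hC : H.ConvexSet C)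
    (hT : MapsTo T C C) (hTne : ∀ x ∈ C, ∀ y ∈ C, dist (T x) (T y) ≤ dist x y)
    (hl : ∀ n, l n ∈ Icc (0 : ℝ) 1) (hns : ¬ Summable l) (hx : x ∈ C)
    (hu : IsBounded (range (H.kmSeq T l x))) {c : X} (hc : c ∈ C) :
    asymptoticRadiusAt (H.kmSeq T l x) (T c) ≤ asymptoticRadiusAt (H.kmSeq T l x) c :=
  limsup_le_limsup_of_le_convex_comb (fun _ => dist_nonneg) (isBoundedUnder_dist hu c) hl hns
    fun n => (H.dist_kmSeq_succ_le (hl n) (T c)).trans <| add_le_add le_rfl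
      (mul_le_mul_of_nonneg_left (hTne _ (H.kmSeq_mem hC hT hl hx n) c hc) (hl n).1)

end WHyp
theorem stmt9 {X : Type*} [MetricSpace X] [CompleteSpace X] (H : WHyp X)
    (η : ℝ → ℝ → ℝ) (hU : H.UnifConvex η) (hmon : MonotoneModulus η)
    (C : Set X) (hCne : C.Nonempty) (hCcl : IsClosed C) (hCconv : H.ConvexSet C)
    (T : X → X) (hT : Set.MapsTo T C C)
    (hTne : ∀ x ∈ C, ∀ y ∈ C, dist (T x) (T y) ≤ dist x y) :
    List.TFAE [
      -- (i) T has a fixed point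
      ∃ p ∈ C, T p = p,
      -- (ii) there is a bounded sequence (u_n) in C with d(u_n, T u_n) → 0
      ∃ u : ℕ → X, (∀ n, u n ∈ C) ∧ Bornology.IsBounded (Set.range u) ∧
        Filter.Tendsto (fun n => dist (u n) (T (u n))) Filter.atTop (nhds 0),
      -- (iii) the Picard iterates are bounded for some x ∈ C
      ∃ x ∈ C, Bornology.IsBounded (Set.range (fun n => T^[n] x)),
      -- (iv) the Picard iterates are bounded for all x ∈ C
      ∀ x ∈ C, Bornology.IsBounded (Set.range (fun n => T^[n] x)),
      -- (v) the KM iteration is bounded for some x ∈ C and some (λ_n) satisfying (a), (b) or (c)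
      ∃ x ∈ C, ∃ l : ℕ → ℝ, (∀ n, l n ∈ Set.Icc (0:ℝ) 1) ∧
        ((∃ lam ∈ Set.Ioc (0:ℝ) 1, ∀ n, l n = lam) ∨
          Filter.Tendsto l Filter.atTop (nhds 1) ∨
          (Filter.limsup l Filter.atTop < 1 ∧ ¬ Summable fun n => l n)) ∧
        Bornology.IsBounded (Set.range (H.kmSeq T l x)),
      -- (vi) the KM iteration is bounded for all x ∈ C and all (λ_n) in [0,1]
      ∀ x ∈ C, ∀ l : ℕ → ℝ, (∀ n, l n ∈ Set.Icc (0:ℝ) 1) →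
        Bornology.IsBounded (Set.range (H.kmSeq T l x))] := by
  tfae_have 1 → 6 := fun ⟨p, hpC, hp⟩ x hx l hl =>
    H.isBounded_range_kmSeq_of_isFixedPt hCconv hT hTne hl hx hpC hp
  tfae_have 6 → 4 := fun h6 x hx => by
    simpa only [H.kmSeq_const_one] using h6 x hx (fun _ => 1) fun _ => ⟨zero_le_one, le_rfl⟩
  tfae_have 4 → 3 := fun h4 => ⟨hCne.some, hCne.some_mem, h4 _ hCne.some_mem⟩
  tfae_have 3 → 5 := fun ⟨x, hx, hb⟩ => ⟨x, hx, fun _ => 1, fun _ => ⟨zero_le_one, le_rfl⟩,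
    Or.inl ⟨1, ⟨one_pos, le_rfl⟩, fun _ => rfl⟩, by rwa [H.kmSeq_const_one]⟩
  tfae_have 1 → 2 := fun ⟨p, hpC, hp⟩ => ⟨fun _ => p, fun _ => hpC,
    isBounded_singleton.subset range_const_subset, by simp only [hp, dist_self, tendsto_const_nhds]⟩
  tfae_have 2 → 1 := fun ⟨u, huC, hu, hTu⟩ =>
    H.exists_isFixedPt_of_asymptoticRadiusAt_map_le hU hmon hCne hCcl hCconv hT hu
      fun _ hc => asymptoticRadiusAt_map_le_of_tendsto_dist hTne huC hu hTu hc
  tfae_have 5 → 1 := by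
    rintro ⟨x, hx, l, hl, hcase, hu⟩
    have hns : ¬ Summable l := by
      rcases hcase with ⟨lam, hlam, hconst⟩ | hto1 | ⟨-, hns⟩
      · exact not_summable_of_tendsto hlam.1.ne'
          (tendsto_const_nhds.congr fun n => (hconst n).symm)
      · exact not_summable_of_tendsto one_ne_zero hto1
      · exact hns
    exact H.exists_isFixedPt_of_asymptoticRadiusAt_map_le hU hmon hCne hCcl hCconv hT hu
      fun _ hc => H.asymptoticRadiusAt_map_le_of_kmSeq hCconv hT hTne hl hns hx hu hc
  tfae_finish
end
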